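/- Let α, ω₁, ω₂ be the three (pairwise distinct) complex roots of x³ - x² - x - 1 = 0. Then for every natural number n ≥ 3, the complex numbers αⁿ, ω₁ⁿ, ω₂ⁿ are exactly the three roots of the cubic y³ - K_n·y² + R_n·y - 1, where K_n = (9H_{n+2} - 2H_{n+1} + 35H_n)/41 and R_n = (4H_nH_{n-1} + 2H_nH_{n-2} + 6H_nH_{n-3} + 6H_n² - 6H_{n+1}H_{n-1} - 6H_{n-1}H_{n-2} - 4H_{n+1}H_{n-2} + H_{n+1}H_{n-3} - 3H_{n-1}²)/41; that is, y³ - K_n·y² + R_n·y - 1 = (y - αⁿ)(y - ω₁ⁿ)(y - ω₂ⁿ) in ℂ[y]. -/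
import Mathlib


open Polynomial

/-- The generalized Tribonacci sequence. -/
def genTrib : ℕ → ℤ
  | 0 => 3
  | 1 => 0
  | 2 => 2
  | n + 3 => genTrib (n + 2) + genTrib (n + 1) + genTrib n

theorem roots_of_matrix_power_char_poly (α ω₁ ω₂ : ℂ)
    (hne₁ : α ≠ ω₁) (hne₂ : α ≠ ω₂) (hne₃ : ω₁ ≠ ω₂)
    (hroots : ∀ x : ℂ, x ^ 3 - x ^ 2 - x - 1 = (x - α) * (x - ω₁) * (x - ω₂))
    (n : ℕ) (hn : 3 ≤ n) :
    (X ^ 3 : Polynomial ℂ) -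
        C ((9 * (genTrib (n + 2) : ℂ) - 2 * (genTrib (n + 1) : ℂ) + 35 * (genTrib n : ℂ)) / 41) *
          X ^ 2 +
        C ((4 * (genTrib n : ℂ) * (genTrib (n - 1) : ℂ) +
            2 * (genTrib n : ℂ) * (genTrib (n - 2) : ℂ) +
            6 * (genTrib n : ℂ) * (genTrib (n - 3) : ℂ) + 6 * (genTrib n : ℂ) ^ 2 -
            6 * (genTrib (n + 1) : ℂ) * (genTrib (n - 1) : ℂ) -
            6 * (genTrib (n - 1) : ℂ) * (genTrib (n - 2) : ℂ) -
            4 * (genTrib (n + 1) : ℂ) * (genTrib (n - 2) : ℂ) +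
            (genTrib (n + 1) : ℂ) * (genTrib (n - 3) : ℂ) -
            3 * (genTrib (n - 1) : ℂ) ^ 2) / 41) * X - 1 =
      (X - C (α ^ n)) * (X - C (ω₁ ^ n)) * (X - C (ω₂ ^ n)) := by
  obtain ⟨m, rfl⟩ : ∃ m, n = m + 3 := ⟨n - 3, by omega⟩
  have hcα : α ^ 3 = α ^ 2 + α + 1 := by linear_combination hroots α
  have hc1 : ω₁ ^ 3 = ω₁ ^ 2 + ω₁ + 1 := by linear_combination hroots ω₁
  have hc2 : ω₂ ^ 3 = ω₂ ^ 2 + ω₂ + 1 := by linear_combination hroots ω₂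
  have he1 : α + ω₁ + ω₂ = 1 := by
    linear_combination (hroots 1) / 2 + (hroots (-1)) / 2 - hroots 0
  have he2 : α * ω₁ + α * ω₂ + ω₁ * ω₂ = -1 := by
    linear_combination -(hroots 1) / 2 + (hroots (-1)) / 2
  have he3 : α * ω₁ * ω₂ = 1 := by linear_combination hroots 0
  have hra : (α * ω₁) ^ 3 = 1 - α * ω₁ - (α * ω₁) ^ 2 := by
    linear_combination ((α * ω₁) ^ 2) * he2 - (α * ω₁) * (α + ω₁ + ω₂) * he3
      - (α * ω₁) * he1 + (α * ω₁ * ω₂ + 1) * he3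
  have hrb : (α * ω₂) ^ 3 = 1 - α * ω₂ - (α * ω₂) ^ 2 := by
    linear_combination ((α * ω₂) ^ 2) * he2 - (α * ω₂) * (α + ω₁ + ω₂) * he3
      - (α * ω₂) * he1 + (α * ω₁ * ω₂ + 1) * he3
  have hrc : (ω₁ * ω₂) ^ 3 = 1 - ω₁ * ω₂ - (ω₁ * ω₂) ^ 2 := by
    linear_combination ((ω₁ * ω₂) ^ 2) * he2 - (ω₁ * ω₂) * (α + ω₁ + ω₂) * he3
      - (ω₁ * ω₂) * he1 + (α * ω₁ * ω₂ + 1) * he3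
  -- power sums
  have pK : ∀ k : ℕ,
      9 * (genTrib (k + 2) : ℂ) - 2 * (genTrib (k + 1) : ℂ) + 35 * (genTrib k : ℂ)
        = 41 * (α ^ k + ω₁ ^ k + ω₂ ^ k) := by
    have key : ∀ k : ℕ,
        (9 * (genTrib (k + 2) : ℂ) - 2 * (genTrib (k + 1) : ℂ) + 35 * (genTrib k : ℂ)
          = 41 * (α ^ k + ω₁ ^ k + ω₂ ^ k)) ∧
        (9 * (genTrib (k + 3) : ℂ) - 2 * (genTrib (k + 2) : ℂ) + 35 * (genTrib (k + 1) : ℂ)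
          = 41 * (α ^ (k + 1) + ω₁ ^ (k + 1) + ω₂ ^ (k + 1))) ∧
        (9 * (genTrib (k + 4) : ℂ) - 2 * (genTrib (k + 3) : ℂ) + 35 * (genTrib (k + 2) : ℂ)
          = 41 * (α ^ (k + 2) + ω₁ ^ (k + 2) + ω₂ ^ (k + 2))) := by
      intro k
      induction k with
      | zero =>
        refine ⟨?_, ?_, ?_⟩ <;>
          simp only [Nat.zero_add, show genTrib 0 = 3 from rfl, show genTrib 1 = 0 from rfl,
            show genTrib 2 = 2 from rfl, show genTrib 3 = 5 from rfl,
            show genTrib 4 = 7 from rfl] <;> push_cast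
        · norm_num
        · linear_combination (-41 : ℂ) * he1
        · linear_combination (-41 : ℂ) * (α + ω₁ + ω₂ + 1) * he1 + 82 * he2
      | succ k ih =>
        obtain ⟨h0, h1, h2⟩ := ih
        refine ⟨by exact_mod_cast h1, by exact_mod_cast h2, ?_⟩
        have c3 : ((genTrib (k + 3) : ℤ) : ℂ)
            = (genTrib (k + 2) : ℂ) + (genTrib (k + 1) : ℂ) + (genTrib k : ℂ) := by
          push_cast [show genTrib (k + 3) = genTrib (k + 2) + genTrib (k + 1) + genTrib k
            from rfl]; ring
        have c4 : ((genTrib (k + 4) : ℤ) : ℂ)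
            = (genTrib (k + 3) : ℂ) + (genTrib (k + 2) : ℂ) + (genTrib (k + 1) : ℂ) := by
          push_cast [show genTrib (k + 4) = genTrib (k + 3) + genTrib (k + 2) + genTrib (k + 1)
            from rfl]; ring
        have c5 : ((genTrib (k + 5) : ℤ) : ℂ)
            = (genTrib (k + 4) : ℂ) + (genTrib (k + 3) : ℂ) + (genTrib (k + 2) : ℂ) := by
          push_cast [show genTrib (k + 5) = genTrib (k + 4) + genTrib (k + 3) + genTrib (k + 2)
            from rfl]; ring
        show 9 * (genTrib (k + 5) : ℂ) - 2 * (genTrib (k + 4) : ℂ) + 35 * (genTrib (k + 3) : ℂ)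
          = 41 * (α ^ (k + 3) + ω₁ ^ (k + 3) + ω₂ ^ (k + 3))
        rw [c4, c3] at h2
        rw [c3] at h1
        rw [c5, c4, c3]
        linear_combination h0 + h1 + h2 - 41 * (α ^ k * hcα + ω₁ ^ k * hc1 + ω₂ ^ k * hc2)
    exact fun k => (key k).1
  -- pairwise products power sums
  have qQ : ∀ k : ℕ,
      4 * (genTrib (k + 3) : ℂ) * (genTrib (k + 2) : ℂ)
        + 2 * (genTrib (k + 3) : ℂ) * (genTrib (k + 1) : ℂ)
        + 6 * (genTrib (k + 3) : ℂ) * (genTrib k : ℂ) + 6 * (genTrib (k + 3) : ℂ) ^ 2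
        - 6 * (genTrib (k + 4) : ℂ) * (genTrib (k + 2) : ℂ)
        - 6 * (genTrib (k + 2) : ℂ) * (genTrib (k + 1) : ℂ)
        - 4 * (genTrib (k + 4) : ℂ) * (genTrib (k + 1) : ℂ)
        + (genTrib (k + 4) : ℂ) * (genTrib k : ℂ) - 3 * (genTrib (k + 2) : ℂ) ^ 2
        = 41 * ((α * ω₁) ^ (k + 3) + (α * ω₂) ^ (k + 3) + (ω₁ * ω₂) ^ (k + 3)) := by
    have key : ∀ k : ℕ,
        (4 * (genTrib (k + 3) : ℂ) * (genTrib (k + 2) : ℂ)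
          + 2 * (genTrib (k + 3) : ℂ) * (genTrib (k + 1) : ℂ)
          + 6 * (genTrib (k + 3) : ℂ) * (genTrib k : ℂ) + 6 * (genTrib (k + 3) : ℂ) ^ 2
          - 6 * (genTrib (k + 4) : ℂ) * (genTrib (k + 2) : ℂ)
          - 6 * (genTrib (k + 2) : ℂ) * (genTrib (k + 1) : ℂ)
          - 4 * (genTrib (k + 4) : ℂ) * (genTrib (k + 1) : ℂ)
          + (genTrib (k + 4) : ℂ) * (genTrib k : ℂ) - 3 * (genTrib (k + 2) : ℂ) ^ 2
          = 41 * ((α * ω₁) ^ (k + 3) + (α * ω₂) ^ (k + 3) + (ω₁ * ω₂) ^ (k + 3))) ∧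
        (4 * (genTrib (k + 4) : ℂ) * (genTrib (k + 3) : ℂ)
          + 2 * (genTrib (k + 4) : ℂ) * (genTrib (k + 2) : ℂ)
          + 6 * (genTrib (k + 4) : ℂ) * (genTrib (k + 1) : ℂ) + 6 * (genTrib (k + 4) : ℂ) ^ 2
          - 6 * (genTrib (k + 5) : ℂ) * (genTrib (k + 3) : ℂ)
          - 6 * (genTrib (k + 3) : ℂ) * (genTrib (k + 2) : ℂ)
          - 4 * (genTrib (k + 5) : ℂ) * (genTrib (k + 2) : ℂ)
          + (genTrib (k + 5) : ℂ) * (genTrib (k + 1) : ℂ) - 3 * (genTrib (k + 3) : ℂ) ^ 2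
          = 41 * ((α * ω₁) ^ (k + 4) + (α * ω₂) ^ (k + 4) + (ω₁ * ω₂) ^ (k + 4))) ∧
        (4 * (genTrib (k + 5) : ℂ) * (genTrib (k + 4) : ℂ)
          + 2 * (genTrib (k + 5) : ℂ) * (genTrib (k + 3) : ℂ)
          + 6 * (genTrib (k + 5) : ℂ) * (genTrib (k + 2) : ℂ) + 6 * (genTrib (k + 5) : ℂ) ^ 2
          - 6 * (genTrib (k + 6) : ℂ) * (genTrib (k + 4) : ℂ)
          - 6 * (genTrib (k + 4) : ℂ) * (genTrib (k + 3) : ℂ)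
          - 4 * (genTrib (k + 6) : ℂ) * (genTrib (k + 3) : ℂ)
          + (genTrib (k + 6) : ℂ) * (genTrib (k + 2) : ℂ) - 3 * (genTrib (k + 4) : ℂ) ^ 2
          = 41 * ((α * ω₁) ^ (k + 5) + (α * ω₂) ^ (k + 5) + (ω₁ * ω₂) ^ (k + 5))) := by
      intro k
      induction k with
      | zero =>
        refine ⟨?_, ?_, ?_⟩ <;>
          simp only [Nat.zero_add, show genTrib 0 = 3 from rfl, show genTrib 1 = 0 from rfl,
            show genTrib 2 = 2 from rfl, show genTrib 3 = 5 from rfl,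
            show genTrib 4 = 7 from rfl, show genTrib 5 = 14 from rfl,
            show genTrib 6 = 26 from rfl] <;> push_cast
        · linear_combination (-41 : ℂ) * (hra + hrb + hrc) + 41 * he2
            + 41 * ((α * ω₁ + α * ω₂ + ω₁ * ω₂ - 1) * he2 - 2 * (α + ω₁ + ω₂) * he3 - 2 * he1)
        · linear_combination (-82 : ℂ) * he2
            - 41 * ((α * ω₁ - 1) * hra + (α * ω₂ - 1) * hrb + (ω₁ * ω₂ - 1) * hrc)
        · linear_combination (41 : ℂ) * he2
            - 82 * ((α * ω₁ + α * ω₂ + ω₁ * ω₂ - 1) * he2 - 2 * (α + ω₁ + ω₂) * he3 - 2 * he1)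
            - 41 * ((α * ω₁) * (α * ω₁ - 1) * hra + (α * ω₂) * (α * ω₂ - 1) * hrb
              + (ω₁ * ω₂) * (ω₁ * ω₂ - 1) * hrc)
      | succ k ih =>
        obtain ⟨h0, h1, h2⟩ := ih
        refine ⟨by exact_mod_cast h1, by exact_mod_cast h2, ?_⟩
        have c3 : ((genTrib (k + 3) : ℤ) : ℂ)
            = (genTrib (k + 2) : ℂ) + (genTrib (k + 1) : ℂ) + (genTrib k : ℂ) := by
          push_cast [show genTrib (k + 3) = genTrib (k + 2) + genTrib (k + 1) + genTrib k
            from rfl]; ring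
        have c4 : ((genTrib (k + 4) : ℤ) : ℂ)
            = (genTrib (k + 3) : ℂ) + (genTrib (k + 2) : ℂ) + (genTrib (k + 1) : ℂ) := by
          push_cast [show genTrib (k + 4) = genTrib (k + 3) + genTrib (k + 2) + genTrib (k + 1)
            from rfl]; ring
        have c5 : ((genTrib (k + 5) : ℤ) : ℂ)
            = (genTrib (k + 4) : ℂ) + (genTrib (k + 3) : ℂ) + (genTrib (k + 2) : ℂ) := by
          push_cast [show genTrib (k + 5) = genTrib (k + 4) + genTrib (k + 3) + genTrib (k + 2)
            from rfl]; ring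
        have c6 : ((genTrib (k + 6) : ℤ) : ℂ)
            = (genTrib (k + 5) : ℂ) + (genTrib (k + 4) : ℂ) + (genTrib (k + 3) : ℂ) := by
          push_cast [show genTrib (k + 6) = genTrib (k + 5) + genTrib (k + 4) + genTrib (k + 3)
            from rfl]; ring
        have c7 : ((genTrib (k + 7) : ℤ) : ℂ)
            = (genTrib (k + 6) : ℂ) + (genTrib (k + 5) : ℂ) + (genTrib (k + 4) : ℂ) := by
          push_cast [show genTrib (k + 7) = genTrib (k + 6) + genTrib (k + 5) + genTrib (k + 4)
            from rfl]; ring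
        show 4 * (genTrib (k + 6) : ℂ) * (genTrib (k + 5) : ℂ)
          + 2 * (genTrib (k + 6) : ℂ) * (genTrib (k + 4) : ℂ)
          + 6 * (genTrib (k + 6) : ℂ) * (genTrib (k + 3) : ℂ) + 6 * (genTrib (k + 6) : ℂ) ^ 2
          - 6 * (genTrib (k + 7) : ℂ) * (genTrib (k + 5) : ℂ)
          - 6 * (genTrib (k + 5) : ℂ) * (genTrib (k + 4) : ℂ)
          - 4 * (genTrib (k + 7) : ℂ) * (genTrib (k + 4) : ℂ)
          + (genTrib (k + 7) : ℂ) * (genTrib (k + 3) : ℂ) - 3 * (genTrib (k + 5) : ℂ) ^ 2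
          = 41 * ((α * ω₁) ^ (k + 6) + (α * ω₂) ^ (k + 6) + (ω₁ * ω₂) ^ (k + 6))
        rw [c4, c3] at h0
        rw [c5, c4, c3] at h1
        rw [c6, c5, c4, c3] at h2
        rw [c7, c6, c5, c4, c3]
        linear_combination h0 - h1 - h2 - 41 * ((α * ω₁) ^ (k + 3) * hra
          + (α * ω₂) ^ (k + 3) * hrb + (ω₁ * ω₂) ^ (k + 3) * hrc)
    exact fun k => (key k).1
  -- scalar identities at n = m + 3
  have hK : (9 * (genTrib (m + 3 + 2) : ℂ) - 2 * (genTrib (m + 3 + 1) : ℂ)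
      + 35 * (genTrib (m + 3) : ℂ)) / 41
      = α ^ (m + 3) + ω₁ ^ (m + 3) + ω₂ ^ (m + 3) := by
    have h := pK (m + 3)
    have h5 : genTrib (m + 3 + 2) = genTrib (m + 5) := rfl
    have h4 : genTrib (m + 3 + 1) = genTrib (m + 4) := rfl
    rw [h5, h4]
    have h' : genTrib (m + 3 + 2) = genTrib (m + 5) := rfl
    linear_combination (pK (m + 3)) / 41
  have hR : (4 * (genTrib (m + 3) : ℂ) * (genTrib (m + 3 - 1) : ℂ) +
      2 * (genTrib (m + 3) : ℂ) * (genTrib (m + 3 - 2) : ℂ) +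
      6 * (genTrib (m + 3) : ℂ) * (genTrib (m + 3 - 3) : ℂ) + 6 * (genTrib (m + 3) : ℂ) ^ 2 -
      6 * (genTrib (m + 3 + 1) : ℂ) * (genTrib (m + 3 - 1) : ℂ) -
      6 * (genTrib (m + 3 - 1) : ℂ) * (genTrib (m + 3 - 2) : ℂ) -
      4 * (genTrib (m + 3 + 1) : ℂ) * (genTrib (m + 3 - 2) : ℂ) +
      (genTrib (m + 3 + 1) : ℂ) * (genTrib (m + 3 - 3) : ℂ) -
      3 * (genTrib (m + 3 - 1) : ℂ) ^ 2) / 41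
      = α ^ (m + 3) * ω₁ ^ (m + 3) + α ^ (m + 3) * ω₂ ^ (m + 3)
        + ω₁ ^ (m + 3) * ω₂ ^ (m + 3) := by
    simp only [show m + 3 - 1 = m + 2 from rfl, show m + 3 - 2 = m + 1 from rfl,
      show m + 3 - 3 = m from rfl, show m + 3 + 1 = m + 4 from rfl]
    linear_combination (qQ m) / 41
  have hP : α ^ (m + 3) * ω₁ ^ (m + 3) * ω₂ ^ (m + 3) = 1 := by
    rw [← mul_pow, ← mul_pow, he3, one_pow]
  have hC1 : C ((9 * (genTrib (m + 3 + 2) : ℂ) - 2 * (genTrib (m + 3 + 1) : ℂ)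
      + 35 * (genTrib (m + 3) : ℂ)) / 41)
      = C (α ^ (m + 3)) + C (ω₁ ^ (m + 3)) + C (ω₂ ^ (m + 3)) := by
    rw [hK]; simp only [C_add]
  have hC2 : C ((4 * (genTrib (m + 3) : ℂ) * (genTrib (m + 3 - 1) : ℂ) +
      2 * (genTrib (m + 3) : ℂ) * (genTrib (m + 3 - 2) : ℂ) +
      6 * (genTrib (m + 3) : ℂ) * (genTrib (m + 3 - 3) : ℂ) + 6 * (genTrib (m + 3) : ℂ) ^ 2 -
      6 * (genTrib (m + 3 + 1) : ℂ) * (genTrib (m + 3 - 1) : ℂ) -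
      6 * (genTrib (m + 3 - 1) : ℂ) * (genTrib (m + 3 - 2) : ℂ) -
      4 * (genTrib (m + 3 + 1) : ℂ) * (genTrib (m + 3 - 2) : ℂ) +
      (genTrib (m + 3 + 1) : ℂ) * (genTrib (m + 3 - 3) : ℂ) -
      3 * (genTrib (m + 3 - 1) : ℂ) ^ 2) / 41)
      = C (α ^ (m + 3)) * C (ω₁ ^ (m + 3)) + C (α ^ (m + 3)) * C (ω₂ ^ (m + 3))
        + C (ω₁ ^ (m + 3)) * C (ω₂ ^ (m + 3)) := by
    rw [hR]; simp only [C_add, C_mul]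
  have hC3 : C (α ^ (m + 3)) * C (ω₁ ^ (m + 3)) * C (ω₂ ^ (m + 3)) = 1 := by
    rw [← C_mul, ← C_mul, hP, C_1]
  linear_combination (-(X : Polynomial ℂ) ^ 2) * hC1 + (X : Polynomial ℂ) * hC2 + hC3
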